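/- Let k ∈ {5,6}, let G be a star k-critical subcubic simple graph, and let x be a vertex of degree 2 with N_G(x) = {z, w}, where d_G(z) ≤ d_G(w). If z and w are adjacent in G, then k = 5, d_G(z) = d_G(w) = 3, and every vertex v ∈ N_G(z) ∪ N_G(w) has degree at least 2 in G. -/

import Mathlib

open SimpleGraph

/-- A star `k`-edge-coloring of `G`: a proper edge-coloring (adjacent edges get
distinct colors) such that no path or cycle of length four is bicolored, i.e.
no walk on four pairwise-distinct edges has its first and third edges equally
colored and its second and fourth edges equally colored. -/
def IsStarEdgeColoring {V : Type*} (G : SimpleGraph V) (k : ℕ)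
    (c : Sym2 V → Fin k) : Prop :=
  (∀ e₁ ∈ G.edgeSet, ∀ e₂ ∈ G.edgeSet, e₁ ≠ e₂ → (∃ v, v ∈ e₁ ∧ v ∈ e₂) →
      c e₁ ≠ c e₂) ∧
  (∀ v₀ v₁ v₂ v₃ v₄ : V, G.Adj v₀ v₁ → G.Adj v₁ v₂ → G.Adj v₂ v₃ → G.Adj v₃ v₄ →
    ([s(v₀, v₁), s(v₁, v₂), s(v₂, v₃), s(v₃, v₄)] : List (Sym2 V)).Pairwise (· ≠ ·) →
    ¬(c s(v₀, v₁) = c s(v₂, v₃) ∧ c s(v₁, v₂) = c s(v₃, v₄)))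

/-- `G` admits a star `k`-edge-coloring; equivalently, `χ'_s(G) ≤ k`. -/
def StarEdgeColorable {V : Type*} (G : SimpleGraph V) (k : ℕ) : Prop :=
  ∃ c : Sym2 V → Fin k, IsStarEdgeColoring G k c

/-- The graph `G - x` obtained from `G` by deleting the vertex `x`
(keeping the ambient vertex type; `x` becomes isolated, which does not affect
edge-colorings). -/
def SimpleGraph.deleteVert {V : Type*} (G : SimpleGraph V) (x : V) : SimpleGraph V where
  Adj u w := G.Adj u w ∧ u ≠ x ∧ w ≠ x
  symm := ⟨fun u w h => ⟨h.1.symm, h.2.2, h.2.1⟩⟩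
  loopless := ⟨fun u h => G.loopless.irrefl u h.1⟩

/-- `G` is star `k`-critical: `χ'_s(G) > k` but `χ'_s(G - v) ≤ k` for every vertex `v`. -/
def StarCritical {V : Type*} (G : SimpleGraph V) (k : ℕ) : Prop :=
  ¬ StarEdgeColorable G k ∧ ∀ v : V, StarEdgeColorable (G.deleteVert v) k

/-- The set of colors used by `c` on edges of `H` incident with `u`. -/
def colorsAt {V : Type*} (H : SimpleGraph V) {k : ℕ} (c : Sym2 V → Fin k) (u : V) :
    Set (Fin k) :=
  {a | ∃ w, H.Adj u w ∧ c s(u, w) = a}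

/-!
By criticality `G - x` has a star coloring `c`, and each conclusion is proved by extending `c`
to `G` otherwise. Coloring `xz` by `α` and `xw` by `β` can only create bicolored paths through
`xz` or `xw`; as `N(x) = {z, w}`, these stay within distance three of `x`, so they are excluded
by conditions on the colors around `z`, `w` and their third neighbors `z₁`, `w₁`. If `z₁` is a
leaf of `G - x` or does not exist (as when `d(z) = 2`), `α` has to avoid three colors and `β`
four, so five colors suffice; with six colors a suitable pair always exists.
-/

section

open Finset

variable {V : Type*} {k : ℕ}

structure IsBicoloredPath (G : SimpleGraph V) (c : Sym2 V → Fin k) (v₀ v₁ v₂ v₃ v₄ : V) :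
    Prop where
  adj₀₁ : G.Adj v₀ v₁
  adj₁₂ : G.Adj v₁ v₂
  adj₂₃ : G.Adj v₂ v₃
  adj₃₄ : G.Adj v₃ v₄
  nodup : [s(v₀, v₁), s(v₁, v₂), s(v₂, v₃), s(v₃, v₄)].Nodup
  color₀₂ : c s(v₀, v₁) = c s(v₂, v₃)
  color₁₃ : c s(v₁, v₂) = c s(v₃, v₄)

namespace IsBicoloredPath

variable {G : SimpleGraph V} {c : Sym2 V → Fin k} {v₀ v₁ v₂ v₃ v₄ : V}

theorem reverse (h : IsBicoloredPath G c v₀ v₁ v₂ v₃ v₄) :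
    IsBicoloredPath G c v₄ v₃ v₂ v₁ v₀ where
  adj₀₁ := h.adj₃₄.symm
  adj₁₂ := h.adj₂₃.symm
  adj₂₃ := h.adj₁₂.symm
  adj₃₄ := h.adj₀₁.symm
  nodup := by
    rw [Sym2.eq_swap (a := v₄), Sym2.eq_swap (a := v₃) (b := v₂),
      Sym2.eq_swap (a := v₂) (b := v₁), Sym2.eq_swap (a := v₁) (b := v₀)]
    exact List.nodup_reverse.mpr h.nodup
  color₀₂ := by rw [Sym2.eq_swap (a := v₄), Sym2.eq_swap (a := v₂), h.color₁₃]
  color₁₃ := by rw [Sym2.eq_swap (a := v₃), Sym2.eq_swap (a := v₁), h.color₀₂]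

theorem ne₀₂ (h : IsBicoloredPath G c v₀ v₁ v₂ v₃ v₄) : v₀ ≠ v₂ := by
  rintro rfl
  simpa [Sym2.eq_swap] using h.nodup

theorem ne₁₃ (h : IsBicoloredPath G c v₀ v₁ v₂ v₃ v₄) : v₁ ≠ v₃ := by
  rintro rfl
  simpa [Sym2.eq_swap] using h.nodup

theorem ne₂₄ (h : IsBicoloredPath G c v₀ v₁ v₂ v₃ v₄) : v₂ ≠ v₄ := by
  rintro rfl
  simpa [Sym2.eq_swap] using h.nodup

theorem edge₀₁_ne_edge₃₄ (h : IsBicoloredPath G c v₀ v₁ v₂ v₃ v₄) : s(v₀, v₁) ≠ s(v₃, v₄) := by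
  intro he
  have := h.nodup
  rw [he] at this
  simp at this

end IsBicoloredPath

theorem isStarEdgeColoring_iff {G : SimpleGraph V} {c : Sym2 V → Fin k} :
    IsStarEdgeColoring G k c ↔
      (∀ v y₁ y₂, G.Adj v y₁ → G.Adj v y₂ → y₁ ≠ y₂ → c s(v, y₁) ≠ c s(v, y₂)) ∧
      ∀ v₀ v₁ v₂ v₃ v₄, ¬IsBicoloredPath G c v₀ v₁ v₂ v₃ v₄ := by
  refine and_congr ⟨fun h v y₁ y₂ h₁ h₂ hne => ?_, fun h e₁ he₁ e₂ he₂ hne ⟨v, hv₁, hv₂⟩ => ?_⟩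
    ⟨fun h v₀ v₁ v₂ v₃ v₄ hP => h _ _ _ _ _ hP.1 hP.2 hP.3 hP.4 hP.5 ⟨hP.6, hP.7⟩,
      fun h v₀ v₁ v₂ v₃ v₄ h₁ h₂ h₃ h₄ hn hc => h _ _ _ _ _ ⟨h₁, h₂, h₃, h₄, hn, hc.1, hc.2⟩⟩
  · exact h _ h₁ _ h₂ (mt Sym2.congr_right.mp hne) ⟨v, Sym2.mem_mk_left _ _, Sym2.mem_mk_left _ _⟩
  · obtain ⟨y₁, rfl⟩ := Sym2.mem_iff_exists.mp hv₁
    obtain ⟨y₂, rfl⟩ := Sym2.mem_iff_exists.mp hv₂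
    exact h v y₁ y₂ he₁ he₂ (fun hy => hne (hy ▸ rfl))

theorem adj_iff_of_neighborSet_eq {G : SimpleGraph V} {x z w v : V}
    (hNx : G.neighborSet x = {z, w}) : G.Adj x v ↔ v = z ∨ v = w := by
  rw [← SimpleGraph.mem_neighborSet, hNx, Set.mem_insert_iff, Set.mem_singleton_iff]

theorem SimpleGraph.deleteVert_le (G : SimpleGraph V) {x : V} : G.deleteVert x ≤ G :=
  fun _ _ h => h.1

theorem SimpleGraph.of_deleteVert_adj {G : SimpleGraph V} {x z u : V} {P : V → Prop}
    (h : ∀ u, G.Adj z u → u = x ∨ P u) (hu : (G.deleteVert x).Adj z u) : P u :=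
  (h u hu.1).resolve_left hu.2.2

theorem IsBicoloredPath.of_deleteVert {G : SimpleGraph V} {c c' : Sym2 V → Fin k} {x : V}
    {v₀ v₁ v₂ v₃ v₄ : V} (h : IsBicoloredPath G c' v₀ v₁ v₂ v₃ v₄)
    (hc : ∀ u v, u ≠ x → v ≠ x → c' s(u, v) = c s(u, v))
    (h₀ : v₀ ≠ x) (h₁ : v₁ ≠ x) (h₂ : v₂ ≠ x) (h₃ : v₃ ≠ x) (h₄ : v₄ ≠ x) :
    IsBicoloredPath (G.deleteVert x) c v₀ v₁ v₂ v₃ v₄ where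
  adj₀₁ := ⟨h.adj₀₁, h₀, h₁⟩
  adj₁₂ := ⟨h.adj₁₂, h₁, h₂⟩
  adj₂₃ := ⟨h.adj₂₃, h₂, h₃⟩
  adj₃₄ := ⟨h.adj₃₄, h₃, h₄⟩
  nodup := h.nodup
  color₀₂ := by rw [← hc _ _ h₀ h₁, ← hc _ _ h₂ h₃, h.color₀₂]
  color₁₃ := by rw [← hc _ _ h₁ h₂, ← hc _ _ h₃ h₄, h.color₁₃]

/-- `x` is a vertex outside `H` whose neighbors are `z` and `w`, and `xz`, `xw` get the colors
`α`, `β`. This is half of what makes the extended coloring star, the other half being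
`AdmissibleAt H c w z β α`: `α` is new at `z`, and no path `u z x w t`, `z x w t p` or
`x z u p q` is bicolored. -/
structure AdmissibleAt (H : SimpleGraph V) (c : Sym2 V → Fin k) (z w : V) (α β : Fin k) :
    Prop where
  notMem_colorsAt : α ∉ colorsAt H c z
  path_center : ∀ u t, H.Adj z u → H.Adj w t → c s(z, u) = β → c s(w, t) ≠ α
  path_second : ∀ t p, H.Adj w t → H.Adj t p → c s(w, t) = α → c s(t, p) ≠ β
  path_first : ∀ u p q, H.Adj z u → H.Adj u p → H.Adj p q → c s(u, p) = α →
    c s(p, q) ≠ c s(z, u)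

variable {G : SimpleGraph V} {c : Sym2 V → Fin k} {x z w : V} {α β : Fin k}

theorem admissibleAt_of_forall_adj {H : SimpleGraph V} {z₁ w₁ : V}
    (hNz : ∀ u, H.Adj z u → u = w ∨ u = z₁) (hNw : ∀ u, H.Adj w u → u = z ∨ u = w₁)
    (hα : α ∉ colorsAt H c z ∪ colorsAt H c z₁) (hβ : β ∉ colorsAt H c w ∪ colorsAt H c w₁)
    (hαβ : ¬(α = c s(w, w₁) ∧ β = c s(z, z₁)))
    (hαd : α = c s(w, w₁) → c s(z, w) ∉ colorsAt H c w₁) : AdmissibleAt H c z w α β := by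
  have mem : ∀ {v u}, H.Adj v u → c s(v, u) ∈ colorsAt H c v := fun h => ⟨_, h, rfl⟩
  have mem' : ∀ {u v}, H.Adj u v → c s(u, v) ∈ colorsAt H c v := fun h =>
    ⟨_, h.symm, by rw [Sym2.eq_swap]⟩
  rw [Set.mem_union, not_or] at hα hβ
  refine ⟨hα.1, fun u t hu ht hu' ht' => ?_, fun t p ht hp ht' hp' => ?_,
    fun u p q hu hp hq hp' hq' => ?_⟩
  · rcases hNz u hu with rfl | rfl
    · exact hβ.1 (hu' ▸ mem' hu)
    · rcases hNw t ht with rfl | rfl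
      · exact hα.1 (ht' ▸ mem' ht)
      · exact hαβ ⟨ht'.symm, hu'.symm⟩
  · rcases hNw t ht with rfl | rfl
    · exact hα.1 (ht' ▸ mem' ht)
    · exact hβ.2 (hp' ▸ mem hp)
  · rcases hNz u hu with rfl | rfl
    · rcases hNw p hp with rfl | rfl
      · exact hα.1 (hp' ▸ mem' hp)
      · exact hαd hp'.symm (hq' ▸ mem hq)
    · exact hα.2 (hp' ▸ mem hp)

section Extension

variable [DecidableEq V]

def extendColoring (c : Sym2 V → Fin k) (x z w : V) (α β : Fin k) : Sym2 V → Fin k :=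
  Function.update (Function.update c s(x, z) α) s(x, w) β

theorem extendColoring_left (hzw : z ≠ w) : extendColoring c x z w α β s(x, z) = α := by
  rw [extendColoring, Function.update_of_ne (mt Sym2.congr_right.mp hzw), Function.update_self]

theorem extendColoring_right : extendColoring c x z w α β s(x, w) = β :=
  Function.update_self _ _ _

theorem extendColoring_of_ne {u v : V} (hu : u ≠ x) (hv : v ≠ x) :
    extendColoring c x z w α β s(u, v) = c s(u, v) := by
  have hne : ∀ y, s(u, v) ≠ s(x, y) := fun y h => by
    rcases Sym2.eq_iff.mp h with ⟨h', -⟩ | ⟨-, h'⟩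
    exacts [hu h', hv h']
  rw [extendColoring, Function.update_of_ne (hne w), Function.update_of_ne (hne z)]

theorem extendColoring_comm (hzw : z ≠ w) :
    extendColoring c x z w α β = extendColoring c x w z β α :=
  Function.update_comm (mt Sym2.congr_right.mp hzw) _ _ _

namespace AdmissibleAt

theorem not_isBicoloredPath_first (h : AdmissibleAt (G.deleteVert x) c z w α β)
    (hNx : G.neighborSet x = {z, w}) (hzw : z ≠ w) {v₂ v₃ v₄ : V}
    (hP : IsBicoloredPath G (extendColoring c x z w α β) x z v₂ v₃ v₄) : False := by
  have hx : ∀ v, G.Adj x v → v = z ∨ v = w := fun v => (adj_iff_of_neighborSet_eq hNx).mp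
  have hz : z ≠ x := (G.ne_of_adj hP.adj₀₁).symm
  have h₂ : v₂ ≠ x := hP.ne₀₂.symm
  have h₃ : v₃ ≠ x := by
    intro h₃
    subst v₃
    have e₂ : v₂ = w := (hx v₂ hP.adj₂₃.symm).resolve_left (G.ne_of_adj hP.adj₁₂).symm
    have e₄ : v₄ = z := (hx v₄ hP.adj₃₄).resolve_right (e₂ ▸ hP.ne₂₄.symm)
    exact hP.edge₀₁_ne_edge₃₄ (by rw [e₄])
  have hc₀₂ := hP.color₀₂
  have hc₁₃ := hP.color₁₃
  rw [extendColoring_left hzw, extendColoring_of_ne h₂ h₃] at hc₀₂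
  rw [extendColoring_of_ne hz h₂] at hc₁₃
  by_cases h₄ : v₄ = x
  · subst v₄
    have e₃ : v₃ = w := (hx v₃ hP.adj₃₄.symm).resolve_left hP.ne₁₃.symm
    subst v₃
    rw [Sym2.eq_swap (a := w), extendColoring_right] at hc₁₃
    rw [Sym2.eq_swap] at hc₀₂
    exact h.path_center v₂ v₂ ⟨hP.adj₁₂, hz, h₂⟩ ⟨hP.adj₂₃.symm, h₃, h₂⟩ hc₁₃ hc₀₂.symm
  · rw [extendColoring_of_ne h₃ h₄] at hc₁₃
    exact h.path_first v₂ v₃ v₄ ⟨hP.adj₁₂, hz, h₂⟩ ⟨hP.adj₂₃, h₂, h₃⟩ ⟨hP.adj₃₄, h₃, h₄⟩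
      hc₀₂.symm hc₁₃.symm

theorem not_isBicoloredPath_second (h : AdmissibleAt (G.deleteVert x) c z w α β)
    (hNx : G.neighborSet x = {z, w}) (hzw : z ≠ w) {v₂ v₃ v₄ : V}
    (hP : IsBicoloredPath G (extendColoring c x z w α β) z x v₂ v₃ v₄) : False := by
  have hx : ∀ v, G.Adj x v → v = z ∨ v = w := fun v => (adj_iff_of_neighborSet_eq hNx).mp
  have e₂ : v₂ = w := (hx v₂ hP.adj₁₂).resolve_left hP.ne₀₂.symm
  subst v₂
  have hw : w ≠ x := G.ne_of_adj hP.adj₁₂ |>.symm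
  have h₃ : v₃ ≠ x := hP.ne₁₃.symm
  have h₄ : v₄ ≠ x := by
    intro h₄
    subst v₄
    have e₃ : v₃ = z := (hx v₃ hP.adj₃₄.symm).resolve_right (G.ne_of_adj hP.adj₂₃).symm
    exact hP.edge₀₁_ne_edge₃₄ (by rw [e₃])
  have hc₀₂ := hP.color₀₂
  have hc₁₃ := hP.color₁₃
  rw [Sym2.eq_swap (a := z), extendColoring_left hzw, extendColoring_of_ne hw h₃] at hc₀₂
  rw [extendColoring_right, extendColoring_of_ne h₃ h₄] at hc₁₃
  exact h.path_second v₃ v₄ ⟨hP.adj₂₃, hw, h₃⟩ ⟨hP.adj₃₄, h₃, h₄⟩ hc₀₂.symm hc₁₃.symm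

theorem not_isBicoloredPath_center (h : AdmissibleAt (G.deleteVert x) c z w α β)
    (hNx : G.neighborSet x = {z, w}) (hzw : z ≠ w) {v₀ v₃ v₄ : V}
    (hP : IsBicoloredPath G (extendColoring c x z w α β) v₀ z x v₃ v₄) : False := by
  have hx : ∀ v, G.Adj x v → v = z ∨ v = w := fun v => (adj_iff_of_neighborSet_eq hNx).mp
  have e₃ : v₃ = w := (hx v₃ hP.adj₂₃).resolve_left hP.ne₁₃.symm
  subst v₃
  have hz : z ≠ x := G.ne_of_adj hP.adj₁₂
  have hw : w ≠ x := (G.ne_of_adj hP.adj₂₃).symm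
  have h₀ : v₀ ≠ x := hP.ne₀₂
  have h₄ : v₄ ≠ x := hP.ne₂₄.symm
  have hc₀₂ := hP.color₀₂
  have hc₁₃ := hP.color₁₃
  rw [extendColoring_of_ne h₀ hz, extendColoring_right, Sym2.eq_swap] at hc₀₂
  rw [Sym2.eq_swap (a := z), extendColoring_left hzw, extendColoring_of_ne hw h₄] at hc₁₃
  exact h.path_center v₀ v₄ ⟨hP.adj₀₁.symm, hz, h₀⟩ ⟨hP.adj₃₄, hw, h₄⟩ hc₀₂ hc₁₃.symm

end AdmissibleAt

theorem extendColoring_ne_of_adj (hc : IsStarEdgeColoring (G.deleteVert x) k c)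
    (hNx : G.neighborSet x = {z, w}) (hzw : z ≠ w) (hα : α ∉ colorsAt (G.deleteVert x) c z)
    (hβ : β ∉ colorsAt (G.deleteVert x) c w) (hαβ : α ≠ β) {v y₁ y₂ : V} (h₁ : G.Adj v y₁)
    (h₂ : G.Adj v y₂) (hne : y₁ ≠ y₂) :
    extendColoring c x z w α β s(v, y₁) ≠ extendColoring c x z w α β s(v, y₂) := by
  have hx : ∀ {v}, G.Adj x v ↔ v = z ∨ v = w := adj_iff_of_neighborSet_eq hNx
  have at_x : ∀ {v y}, G.Adj v y → G.Adj v x → y ≠ x →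
      extendColoring c x z w α β s(v, y) ≠ extendColoring c x z w α β s(v, x) := by
    intro v y hy hvx hyx
    have hv : v ≠ x := G.ne_of_adj hvx
    rw [extendColoring_of_ne hv hyx, Sym2.eq_swap (b := x)]
    rcases hx.mp hvx.symm with rfl | rfl
    · rw [extendColoring_left hzw]
      exact fun h => hα ⟨y, ⟨hy, hv, hyx⟩, h⟩
    · rw [extendColoring_comm hzw, extendColoring_left hzw.symm]
      exact fun h => hβ ⟨y, ⟨hy, hv, hyx⟩, h⟩
  by_cases hv : v = x
  · subst v
    rcases hx.mp h₁ with rfl | rfl <;> rcases hx.mp h₂ with rfl | rfl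
    · exact absurd rfl hne
    · rwa [extendColoring_left hzw, extendColoring_right]
    · rwa [extendColoring_left hzw, extendColoring_right, ne_comm]
    · exact absurd rfl hne
  by_cases hy₁ : y₁ = x
  · subst y₁
    exact (at_x h₂ h₁ hne.symm).symm
  by_cases hy₂ : y₂ = x
  · subst y₂
    exact at_x h₁ h₂ hne
  rw [extendColoring_of_ne hv hy₁, extendColoring_of_ne hv hy₂]
  exact (isStarEdgeColoring_iff.mp hc).1 v y₁ y₂ ⟨h₁, hv, hy₁⟩ ⟨h₂, hv, hy₂⟩ hne

theorem not_isBicoloredPath_extendColoring (hc : IsStarEdgeColoring (G.deleteVert x) k c)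
    (hNx : G.neighborSet x = {z, w}) (hzw : z ≠ w) (hz : AdmissibleAt (G.deleteVert x) c z w α β)
    (hw : AdmissibleAt (G.deleteVert x) c w z β α) {v₀ v₁ v₂ v₃ v₄ : V} :
    ¬IsBicoloredPath G (extendColoring c x z w α β) v₀ v₁ v₂ v₃ v₄ := by
  have hNx' : G.neighborSet x = {w, z} := hNx.trans (Set.pair_comm z w)
  have hcomm : extendColoring c x z w α β = extendColoring c x w z β α := extendColoring_comm hzw
  have hx : ∀ {v}, G.Adj x v ↔ v = z ∨ v = w := adj_iff_of_neighborSet_eq hNx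
  have front : ∀ {v₀ v₁ v₂ v₃ v₄},
      IsBicoloredPath G (extendColoring c x z w α β) v₀ v₁ v₂ v₃ v₄ →
      x = v₀ ∨ x = v₁ ∨ x = v₂ → False := by
    rintro v₀ v₁ v₂ v₃ v₄ hP (rfl | rfl | rfl)
    · rcases hx.mp hP.adj₀₁ with rfl | rfl
      · exact hz.not_isBicoloredPath_first hNx hzw hP
      · exact hw.not_isBicoloredPath_first hNx' hzw.symm (hcomm ▸ hP)
    · rcases hx.mp hP.adj₀₁.symm with rfl | rfl
      · exact hz.not_isBicoloredPath_second hNx hzw hP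
      · exact hw.not_isBicoloredPath_second hNx' hzw.symm (hcomm ▸ hP)
    · rcases hx.mp hP.adj₁₂.symm with rfl | rfl
      · exact hz.not_isBicoloredPath_center hNx hzw hP
      · exact hw.not_isBicoloredPath_center hNx' hzw.symm (hcomm ▸ hP)
  intro hP
  by_cases hback : x = v₃ ∨ x = v₄
  · exact front hP.reverse (by tauto)
  by_cases hfront : x = v₀ ∨ x = v₁ ∨ x = v₂
  · exact front hP hfront
  simp only [not_or] at hback hfront
  exact (isStarEdgeColoring_iff.mp hc).2 _ _ _ _ _ (hP.of_deleteVert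
    (fun _ _ => extendColoring_of_ne) (Ne.symm hfront.1) (Ne.symm hfront.2.1)
    (Ne.symm hfront.2.2) (Ne.symm hback.1) (Ne.symm hback.2))

theorem IsStarEdgeColoring.extend (hc : IsStarEdgeColoring (G.deleteVert x) k c)
    (hNx : G.neighborSet x = {z, w}) (hzw : z ≠ w) (hz : AdmissibleAt (G.deleteVert x) c z w α β)
    (hw : AdmissibleAt (G.deleteVert x) c w z β α) (hαβ : α ≠ β) :
    IsStarEdgeColoring G k (extendColoring c x z w α β) :=
  isStarEdgeColoring_iff.mpr
    ⟨fun _ _ _ => extendColoring_ne_of_adj hc hNx hzw hz.notMem_colorsAt hw.notMem_colorsAt hαβ,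
      fun _ _ _ _ _ => not_isBicoloredPath_extendColoring hc hNx hzw hz hw⟩

end Extension

theorem exists_notMem_of_card_lt {F : Finset (Fin k)} (h : #F < k) : ∃ γ, γ ∉ F := by
  obtain ⟨γ, -, hγ⟩ := exists_mem_notMem_of_card_lt_card (s := F) (t := univ)
    (by rwa [card_univ, Fintype.card_fin])
  exact ⟨γ, hγ⟩

theorem exists_notMem_notMem_ne {F₁ F₂ : Finset (Fin k)} (h₁ : #F₁ < k) (h₂ : #F₂ < k)
    (h : #F₁ + #F₂ + 3 ≤ 2 * k) : ∃ α ∉ F₁, ∃ β ∉ F₂, α ≠ β := by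
  rcases le_or_gt (#F₁ + 2) k with h' | h'
  · obtain ⟨β, hβ⟩ := exists_notMem_of_card_lt h₂
    obtain ⟨α, hα⟩ := exists_notMem_of_card_lt ((card_insert_le β F₁).trans_lt (by omega))
    exact ⟨α, fun h => hα (mem_insert_of_mem h), β, hβ, fun e => hα (e ▸ mem_insert_self _ _)⟩
  · obtain ⟨α, hα⟩ := exists_notMem_of_card_lt h₁
    obtain ⟨β, hβ⟩ := exists_notMem_of_card_lt ((card_insert_le α F₂).trans_lt (by omega))
    exact ⟨α, hα, β, fun h => hβ (mem_insert_of_mem h), fun e => hβ (e ▸ mem_insert_self _ _)⟩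

/-- `a`, `b`, `d` stand for the colors of `zw`, `zz₁`, `ww₁` and `Z`, `W` for the colors at `z₁`,
`w₁`. Either `α = d` works, or one of the two sets of colors to avoid has at most four elements. -/
theorem exists_colors_fin_six (a b d : Fin 6) {Z W : Finset (Fin 6)} (hZ : #Z ≤ 3)
    (hW : #W ≤ 3) (hd : d ∈ W) :
    ∃ α β, α ∉ insert a Z ∧ β ∉ insert a W ∧ α ≠ β ∧ ¬(α = d ∧ β = b) ∧
      (α = d → a ∉ W) ∧ (β = b → a ∉ Z) := by
  have hZ' := card_insert_le a Z
  have hW' := card_insert_le a W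
  have hdZ := card_insert_le d (insert a Z)
  have hbW := card_insert_le b (insert a W)
  by_cases hd' : a ∉ W ∧ d ∉ insert a Z
  · obtain ⟨β, hβ⟩ := exists_notMem_of_card_lt (F := insert b (insert a W)) (by omega)
    refine ⟨d, β, hd'.2, fun h => hβ (mem_insert_of_mem h), fun e => hβ ?_,
      fun h => hβ (h.2 ▸ mem_insert_self _ _), fun _ => hd'.1,
      fun h => (hβ (h ▸ mem_insert_self _ _)).elim⟩
    exact mem_insert_of_mem (mem_insert_of_mem (e ▸ hd))
  · have hcard : #(insert d (insert a Z)) + #(insert b (insert a W)) ≤ 9 := by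
      rcases not_and_or.mp hd' with h | h
      · rw [insert_eq_of_mem (not_not.mp h)] at hbW ⊢
        omega
      · rw [insert_eq_of_mem (not_not.mp h)]
        omega
    obtain ⟨α, hα, β, hβ, hαβ⟩ := exists_notMem_notMem_ne (k := 6) (F₁ := insert d (insert a Z))
      (F₂ := insert b (insert a W)) (by omega) (by omega) (by omega)
    refine ⟨α, β, fun h => hα (mem_insert_of_mem h), fun h => hβ (mem_insert_of_mem h), hαβ,
      fun h => hα (h.1 ▸ mem_insert_self _ _), fun h => (hα (h ▸ mem_insert_self _ _)).elim,
      fun h => (hβ (h ▸ mem_insert_self _ _)).elim⟩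

namespace SimpleGraph

variable {G : SimpleGraph V} [Fintype V] [DecidableRel G.Adj] {v a b u : V}

theorem mem_of_adj_of_degree_le {s : Finset V} (hs : ∀ a ∈ s, G.Adj v a)
    (hdeg : G.degree v ≤ #s) (hu : G.Adj v u) : u ∈ s := by
  have hsN : s ⊆ G.neighborFinset v := fun a ha => (G.mem_neighborFinset v a).mpr (hs a ha)
  rw [eq_of_subset_of_card_le hsN (by rwa [card_neighborFinset_eq_degree])]
  exact (G.mem_neighborFinset v u).mpr hu

theorem eq_of_degree_le_one [DecidableEq V] (h : G.degree v ≤ 1) (ha : G.Adj v a)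
    (hu : G.Adj v u) : u = a :=
  mem_singleton.mp (mem_of_adj_of_degree_le (s := {a}) (by simpa) (by simpa) hu)

theorem eq_or_eq_of_degree_le_two [DecidableEq V] (h : G.degree v ≤ 2) (ha : G.Adj v a)
    (hb : G.Adj v b) (hab : a ≠ b) (hu : G.Adj v u) : u = a ∨ u = b := by
  simpa using mem_of_adj_of_degree_le (s := {a, b}) (by simp [ha, hb]) (by rwa [card_pair hab]) hu

theorem exists_adj_of_degree_eq_three [DecidableEq V] (h : G.degree v = 3) (ha : G.Adj v a)
    (hb : G.Adj v b) (hab : a ≠ b) :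
    ∃ c, G.Adj v c ∧ ∀ u, G.Adj v u → u = a ∨ u = b ∨ u = c := by
  obtain ⟨c, hc, hcab⟩ := exists_mem_notMem_of_card_lt_card (s := {a, b})
    (t := G.neighborFinset v) (by rw [card_neighborFinset_eq_degree, card_pair hab, h]; omega)
  rw [mem_neighborFinset] at hc
  simp only [mem_insert, mem_singleton, not_or] at hcab
  refine ⟨c, hc, fun u hu => ?_⟩
  have habc : #{a, b, c} = 3 :=
    card_eq_three.mpr ⟨a, b, c, hab, Ne.symm hcab.1, Ne.symm hcab.2, rfl⟩
  simpa using mem_of_adj_of_degree_le (s := {a, b, c}) (by simp [ha, hb, hc]) (by rw [habc, h]) hu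

theorem exists_forall_adj_of_degree_le_three [DecidableEq V] (h : G.degree v ≤ 3)
    (ha : G.Adj v a) (hb : G.Adj v b) (hab : a ≠ b) :
    ∃ c, ∀ u, G.Adj v u → u = a ∨ u = b ∨ u = c := by
  rcases h.lt_or_eq with h | h
  · exact ⟨a, fun u hu => (eq_or_eq_of_degree_le_two (by omega) ha hb hab hu).imp_right Or.inl⟩
  · obtain ⟨c, -, hc⟩ := exists_adj_of_degree_eq_three h ha hb hab
    exact ⟨c, hc⟩

end SimpleGraph

section Colorings

variable [Fintype V] {G H : SimpleGraph V} [DecidableRel G.Adj]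
  {c : Sym2 V → Fin k} {x z w z₁ w₁ : V}

theorem colorsAt_subset_image (hH : H ≤ G) (v : V) :
    colorsAt H c v ⊆ ↑((G.neighborFinset v).image fun u => c s(v, u)) := by
  rintro _ ⟨u, hu, rfl⟩
  exact mem_coe.mpr (mem_image_of_mem _ ((G.mem_neighborFinset v u).mpr (hH hu)))

theorem colorsAt_union_subset (hH : H ≤ G) (hN : ∀ u, H.Adj z u → u = w ∨ u = z₁) :
    colorsAt H c z ∪ colorsAt H c z₁ ⊆
      ↑(insert (c s(z, w)) ((G.neighborFinset z₁).image fun u => c s(z₁, u))) := by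
  rw [coe_insert]
  rintro _ (⟨u, hu, rfl⟩ | hγ)
  · rcases hN u hu with rfl | rfl
    · exact Set.mem_insert _ _
    · refine Set.mem_insert_of_mem _ (mem_image.mpr ⟨z, ?_, congrArg c Sym2.eq_swap⟩)
      exact (G.mem_neighborFinset _ _).mpr (hH hu).symm
  · exact Set.mem_insert_of_mem _ (colorsAt_subset_image hH z₁ hγ)

theorem starEdgeColorable_of_pendant [DecidableEq V] (hk : 5 ≤ k)
    (hc : IsStarEdgeColoring (G.deleteVert x) k c) (hNx : G.neighborSet x = {z, w}) (hzw : z ≠ w)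
    (hNz : ∀ u, G.Adj z u → u = x ∨ u = w ∨ u = z₁) (hNw : ∀ u, G.Adj w u → u = x ∨ u = z ∨ u = w₁)
    (hz₁ : ∀ u, (G.deleteVert x).Adj z₁ u → u = z) (hw₁ : G.degree w₁ ≤ 3) :
    StarEdgeColorable G k := by
  have hNzH : ∀ u, (G.deleteVert x).Adj z u → u = w ∨ u = z₁ := fun _ => of_deleteVert_adj hNz
  have hNwH : ∀ u, (G.deleteVert x).Adj w u → u = z ∨ u = w₁ := fun _ => of_deleteVert_adj hNw
  set W := (G.neighborFinset w₁).image fun u => c s(w₁, u)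
  have hW : #W ≤ 3 := card_image_le.trans ((G.card_neighborFinset_eq_degree w₁).trans_le hw₁)
  have hwz : c s(w, z) = c s(z, w) := by rw [Sym2.eq_swap]
  obtain ⟨α, hα, β, hβ, hαβ⟩ := exists_notMem_notMem_ne
    (F₁ := {c s(z, w), c s(z, z₁), c s(w, w₁)}) (F₂ := insert (c s(z, w)) W)
    (card_le_three.trans_lt (by omega)) ((card_insert_le _ _).trans_lt (by omega))
    (by have := card_le_three (a := c s(z, w)) (b := c s(z, z₁)) (c := c s(w, w₁))
        have := card_insert_le (c s(z, w)) W
        omega)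
  simp only [mem_insert, mem_singleton, not_or] at hα
  have hαH : α ∉ colorsAt (G.deleteVert x) c z ∪ colorsAt (G.deleteVert x) c z₁ := by
    rintro (⟨u, hu, rfl⟩ | ⟨u, hu, rfl⟩)
    · rcases hNzH u hu with rfl | rfl
      exacts [hα.1 rfl, hα.2.1 rfl]
    · obtain rfl := hz₁ u hu
      exact hα.2.1 (congrArg c Sym2.eq_swap)
  have hβH : β ∉ colorsAt (G.deleteVert x) c w ∪ colorsAt (G.deleteVert x) c w₁ := fun h =>
    hβ (hwz ▸ colorsAt_union_subset G.deleteVert_le hNwH h)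
  refine ⟨_, hc.extend hNx hzw (admissibleAt_of_forall_adj hNzH hNwH hαH hβH
    (fun h => hα.2.2 h.1) (fun h => absurd h hα.2.2))
    (admissibleAt_of_forall_adj hNwH hNzH hβH hαH (fun h => hα.2.2 h.2) ?_) hαβ⟩
  rintro hb ⟨u, hu, hu'⟩
  obtain rfl := hz₁ u hu
  exact hβ (mem_insert.mpr (Or.inl (by rw [hb, Sym2.eq_swap, hu', hwz])))

theorem starEdgeColorable_six [DecidableEq V] {c : Sym2 V → Fin 6}
    (hc : IsStarEdgeColoring (G.deleteVert x) 6 c) (hNx : G.neighborSet x = {z, w}) (hzw : z ≠ w)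
    (hNz : ∀ u, G.Adj z u → u = x ∨ u = w ∨ u = z₁) (hNw : ∀ u, G.Adj w u → u = x ∨ u = z ∨ u = w₁)
    (hww₁ : G.Adj w w₁) (hz₁ : G.degree z₁ ≤ 3) (hw₁ : G.degree w₁ ≤ 3) :
    StarEdgeColorable G 6 := by
  have hNzH : ∀ u, (G.deleteVert x).Adj z u → u = w ∨ u = z₁ := fun _ => of_deleteVert_adj hNz
  have hNwH : ∀ u, (G.deleteVert x).Adj w u → u = z ∨ u = w₁ := fun _ => of_deleteVert_adj hNw
  set Z := (G.neighborFinset z₁).image fun u => c s(z₁, u)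
  set W := (G.neighborFinset w₁).image fun u => c s(w₁, u)
  have hZ : #Z ≤ 3 := card_image_le.trans ((G.card_neighborFinset_eq_degree z₁).trans_le hz₁)
  have hW : #W ≤ 3 := card_image_le.trans ((G.card_neighborFinset_eq_degree w₁).trans_le hw₁)
  have hd : c s(w, w₁) ∈ W :=
    mem_image.mpr ⟨w, (G.mem_neighborFinset _ _).mpr hww₁.symm, congrArg c Sym2.eq_swap⟩
  have hwz : c s(w, z) = c s(z, w) := by rw [Sym2.eq_swap]
  obtain ⟨α, β, hα, hβ, hαβ, hdb, hαd, hβb⟩ :=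
    exists_colors_fin_six (c s(z, w)) (c s(z, z₁)) (c s(w, w₁)) hZ hW hd
  have hαH : α ∉ colorsAt (G.deleteVert x) c z ∪ colorsAt (G.deleteVert x) c z₁ := fun h =>
    hα (colorsAt_union_subset G.deleteVert_le hNzH h)
  have hβH : β ∉ colorsAt (G.deleteVert x) c w ∪ colorsAt (G.deleteVert x) c w₁ := fun h =>
    hβ (hwz ▸ colorsAt_union_subset G.deleteVert_le hNwH h)
  refine ⟨_, hc.extend hNx hzw (admissibleAt_of_forall_adj hNzH hNwH hαH hβH hdb
    fun h ha => hαd h (colorsAt_subset_image G.deleteVert_le w₁ ha))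
    (admissibleAt_of_forall_adj hNwH hNzH hβH hαH (fun h => hdb ⟨h.2, h.1⟩)
    fun h ha => hβb h (colorsAt_subset_image G.deleteVert_le z₁ (hwz ▸ ha))) hαβ⟩

theorem starEdgeColorable_of_degree_le_two [DecidableEq V] (hk : 5 ≤ k)
    (hsub : ∀ v, G.degree v ≤ 3) (hc : IsStarEdgeColoring (G.deleteVert x) k c)
    (hNx : G.neighborSet x = {z, w}) (hzw : z ≠ w) (hadj : G.Adj z w) (hz : G.degree z ≤ 2) :
    StarEdgeColorable G k := by
  have hxz : G.Adj x z := (adj_iff_of_neighborSet_eq hNx).mpr (Or.inl rfl)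
  have hxw : G.Adj x w := (adj_iff_of_neighborSet_eq hNx).mpr (Or.inr rfl)
  obtain ⟨w₁, hw₁⟩ :=
    exists_forall_adj_of_degree_le_three (hsub w) hxw.symm hadj.symm (G.ne_of_adj hxz)
  -- `x` is isolated in `G - x`, so it can play the pendant neighbor of `z`
  exact starEdgeColorable_of_pendant (z₁ := x) hk hc hNx hzw
    (fun u hu => (eq_or_eq_of_degree_le_two hz hxz.symm hadj (G.ne_of_adj hxw) hu).imp_right
      Or.inl) hw₁ (fun u hu => absurd rfl hu.2.1) (hsub w₁)

end Colorings

end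

/-- Lemma 2(a): `x` has degree 2 with `N_G(x) = {z, w}`, `d(z) ≤ d(w)`. If `z w ∈ E(G)`,
then `k = 5`, `d(z) = d(w) = 3`, and every vertex of `N_G(z) ∪ N_G(w)` has degree ≥ 2. -/
theorem lemma2a {V : Type*} [Fintype V] [DecidableEq V] (G : SimpleGraph V)
    [DecidableRel G.Adj] (hsub : ∀ v : V, G.degree v ≤ 3)
    (k : ℕ) (hk : k = 5 ∨ k = 6) (hcrit : StarCritical G k)
    (x z w : V) (hx : G.degree x = 2) (hzw : z ≠ w)
    (hNx : G.neighborSet x = {z, w}) (hd : G.degree z ≤ G.degree w)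
    (hadj : G.Adj z w) :
    k = 5 ∧ G.degree z = 3 ∧ G.degree w = 3 ∧
      ∀ v ∈ G.neighborSet z ∪ G.neighborSet w, 2 ≤ G.degree v := by
  obtain ⟨c, hc⟩ := hcrit.2 x
  have hxz : G.Adj x z := (adj_iff_of_neighborSet_eq hNx).mpr (Or.inl rfl)
  have hxw : G.Adj x w := (adj_iff_of_neighborSet_eq hNx).mpr (Or.inr rfl)
  have hk_ge : 5 ≤ k := by omega
  have hz3 : G.degree z = 3 := (hsub z).antisymm <| not_lt.mp fun h =>
    hcrit.1 (starEdgeColorable_of_degree_le_two hk_ge hsub hc hNx hzw hadj (by omega))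
  have hw3 : G.degree w = 3 := (hsub w).antisymm (hz3 ▸ hd)
  obtain ⟨z₁, hzz₁, hNz⟩ := exists_adj_of_degree_eq_three hz3 hxz.symm hadj (G.ne_of_adj hxw)
  obtain ⟨w₁, hww₁, hNw⟩ :=
    exists_adj_of_degree_eq_three hw3 hxw.symm hadj.symm (G.ne_of_adj hxz)
  have hk5 : k = 5 := hk.resolve_right fun h => by
    subst h
    exact hcrit.1 (starEdgeColorable_six hc hNx hzw hNz hNw hww₁ (hsub z₁) (hsub w₁))
  refine ⟨hk5, hz3, hw3, ?_⟩
  rintro v (hv | hv)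
  · rcases hNz v hv with rfl | rfl | rfl
    · omega
    · omega
    · exact not_lt.mp fun h => hcrit.1 (starEdgeColorable_of_pendant hk_ge hc hNx hzw hNz hNw
        (fun u hu => eq_of_degree_le_one (by omega) hzz₁.symm hu.1) (hsub w₁))
  · rcases hNw v hv with rfl | rfl | rfl
    · omega
    · omega
    · exact not_lt.mp fun h => hcrit.1 (starEdgeColorable_of_pendant hk_ge hc
        (hNx.trans (Set.pair_comm z w)) hzw.symm hNw hNz
        (fun u hu => eq_of_degree_le_one (by omega) hww₁.symm hu.1) (hsub z₁))
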